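/- arXiv:2601.07147 — 2 statements merged into one kernel-verified Lean document; each statement's English description precedes it below -/
import Mathlib

section
/- Let X_1,...,X_M be independent Bernoulli variables with Pr(X_m=1) = p_m, S = Σ X_m, and T ≥ 1 an integer with T ≤ M. Then Pr(S ≥ T) = Σ_{k=T}^{M} (−1)^{k+T} C(k−1, T−1) ξ_k(p_1,...,p_M), where ξ_k is the k-th elementary symmetric polynomial. -/
/-!
For 0/1 values `x m` with sum `s`, `esp M k x = s.choose k`. Newton's forward-difference formula
expands the step function as `𝟙[T ≤ s] = ∑ k, s.choose k • Δ^k 𝟙[T ≤ ·] 0`, and since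
`Δ 𝟙[T ≤ ·]` is the point mass at `T - 1`, the coefficients are
`Δ^k 𝟙[T ≤ ·] 0 = (-1)^(k - T) * (k - 1).choose (T - 1)`.
Taking expectations, independence gives `𝔼 [∏ m ∈ A, X m] = ∏ m ∈ A, p m`, hence
`𝔼 [esp M k X] = esp M k p`.
-/

open MeasureTheory ProbabilityTheory Finset
open scoped fwdDiff

/-- `esp M k x` is the `k`-th elementary symmetric polynomial of `x : Fin M → ℝ`. -/
def esp (M k : ℕ) (x : Fin M → ℝ) : ℝ :=
  ∑ S ∈ Finset.univ.powersetCard k, ∏ m ∈ S, x m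

lemma fwdDiff_ite_le (t : ℕ) :
    Δ_[1] (fun s : ℕ ↦ if t + 1 ≤ s then (1 : ℤ) else 0) = fun s ↦ if s = t then 1 else 0 := by
  ext s
  simp only [fwdDiff]
  split_ifs <;> omega

lemma fwdDiff_iter_ite_le_zero {T : ℕ} (hT : 1 ≤ T) (k : ℕ) :
    (Δ_[1])^[k] (fun s : ℕ ↦ if T ≤ s then (1 : ℤ) else 0) 0 =
      if T ≤ k then (-1) ^ (k + T) * ((k - 1).choose (T - 1) : ℤ) else 0 := by
  obtain ⟨t, rfl⟩ := Nat.exists_eq_add_of_le' hT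
  cases k with
  | zero => simp
  | succ k =>
    rw [Function.iterate_succ_apply, fwdDiff_ite_le, fwdDiff_iter_eq_sum_shift]
    simp only [zero_add, smul_eq_mul, mul_one, mul_ite, mul_zero, sum_ite_eq',
      mem_range, add_tsub_cancel_right, Nat.lt_succ_iff, Nat.add_le_add_iff_right]
    split_ifs with h
    · rw [show k + 1 + (t + 1) = k - t + 2 * (t + 1) by omega, pow_add, pow_mul]
      simp
    · rfl

theorem ite_le_eq_sum_Icc_choose {T s M : ℕ} (hT : 1 ≤ T) (hsM : s ≤ M) :
    (if T ≤ s then (1 : ℤ) else 0) =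
      ∑ k ∈ Icc T M, (-1) ^ (k + T) * ((k - 1).choose (T - 1) : ℤ) * s.choose k := by
  have newton := shift_eq_sum_fwdDiff_iter 1 (fun s : ℕ ↦ if T ≤ s then (1 : ℤ) else 0) s 0
  simp only [zero_add, smul_eq_mul, mul_one, fwdDiff_iter_ite_le_zero hT] at newton
  have hIcc : (range (M + 1)).filter (T ≤ ·) = Icc T M := by
    ext k
    simp only [mem_filter, mem_range, mem_Icc]
    omega
  rw [newton, ← hIcc, sum_filter]
  refine (sum_subset (range_subset_range.2 (Nat.succ_le_succ hsM)) fun k _ hk ↦ ?_).trans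
    (sum_congr rfl fun k _ ↦ ?_)
  · rw [mem_range, not_lt] at hk
    rw [Nat.choose_eq_zero_of_lt hk, zero_smul]
  · split_ifs
    · rw [nsmul_eq_mul, mul_comm]
    · rw [smul_zero]

theorem Finset.sum_powersetCard_prod_eq_choose {ι : Type*} [Fintype ι] (x : ι → ℕ)
    (hx : ∀ i, x i ≤ 1) (k : ℕ) :
    ∑ A ∈ univ.powersetCard k, ∏ i ∈ A, x i = (∑ i, x i).choose k := by
  have hx_ite : ∀ i, x i = if x i = 1 then 1 else 0 := fun i ↦ by have := hx i; split_ifs <;> omega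
  have hsum : ∑ i, x i = #{i | x i = 1} := by
    rw [Fintype.sum_congr _ _ hx_ite, sum_boole]
    rfl
  have hfilter : (univ.powersetCard k).filter (fun A ↦ ∀ i ∈ A, x i = 1) =
      ({i | x i = 1} : Finset ι).powersetCard k := by
    ext A
    simp only [mem_filter, mem_powersetCard, subset_iff, mem_univ, implies_true, true_and]
    tauto
  have hprod (A : Finset ι) : ∏ i ∈ A, x i = if ∀ i ∈ A, x i = 1 then 1 else 0 :=
    (prod_congr rfl fun i _ ↦ hx_ite i).trans prod_boole
  simp_rw [hprod]
  rw [sum_boole, hfilter, card_powersetCard, hsum]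
  rfl

theorem ite_le_sum_eq_sum_esp {M T : ℕ} (hT : 1 ≤ T) (x : Fin M → ℕ) (hx : ∀ m, x m ≤ 1) :
    (if T ≤ ∑ m, x m then (1 : ℝ) else 0) =
      ∑ k ∈ Icc T M,
        (-1) ^ (k + T) * ((k - 1).choose (T - 1) : ℝ) * esp M k (x · : Fin M → ℝ) := by
  have hsum_le : ∑ m, x m ≤ M := (sum_le_sum fun m _ ↦ hx m).trans (by simp)
  have hesp (k : ℕ) : esp M k (x · : Fin M → ℝ) = ((∑ m, x m).choose k : ℕ) := by
    rw [esp, ← sum_powersetCard_prod_eq_choose x hx k]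
    push_cast
    rfl
  simp_rw [hesp]
  exact_mod_cast ite_le_eq_sum_Icc_choose hT hsum_le

theorem integral_natCast_of_le_one {Ω : Type*} [MeasurableSpace Ω] {μ : Measure Ω} {X : Ω → ℕ}
    (hX : Measurable X) (hX1 : ∀ ω, X ω ≤ 1) : ∫ ω, (X ω : ℝ) ∂μ = μ.real {ω | X ω = 1} := by
  have hind : (fun ω ↦ (X ω : ℝ)) = {ω | X ω = 1}.indicator 1 := by
    funext ω
    rcases Nat.le_one_iff_eq_zero_or_eq_one.1 (hX1 ω) with h | h <;> simp [h]
  rw [hind]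
  exact integral_indicator_one (hX (measurableSet_singleton 1))

theorem ProbabilityTheory.iIndepFun.integral_finset_prod {Ω ι 𝕜 : Type*} [MeasurableSpace Ω]
    {μ : Measure Ω} [RCLike 𝕜] {Y : ι → Ω → 𝕜} (hY : iIndepFun Y μ)
    (mY : ∀ i, AEStronglyMeasurable (Y i) μ) (A : Finset ι) :
    ∫ ω, ∏ i ∈ A, Y i ω ∂μ = ∏ i ∈ A, ∫ ω, Y i ω ∂μ := by
  have := (hY.restrict A).integral_fun_prod_eq_prod_integral fun i ↦ mY i
  simp_rw [← A.prod_coe_sort]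
  exact this

theorem integrable_finset_prod_of_norm_le_one {Ω ι 𝕜 : Type*} [MeasurableSpace Ω]
    {μ : Measure Ω} [IsFiniteMeasure μ] [RCLike 𝕜] {Y : ι → Ω → 𝕜}
    (mY : ∀ i, AEStronglyMeasurable (Y i) μ) (hY : ∀ i ω, ‖Y i ω‖ ≤ 1) (A : Finset ι) :
    Integrable (fun ω ↦ ∏ i ∈ A, Y i ω) μ := by
  refine Integrable.of_bound (A.aestronglyMeasurable_fun_prod fun i _ ↦ mY i) 1
    (ae_of_all _ fun ω ↦ ?_)
  rw [norm_prod]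
  exact prod_le_one (fun _ _ ↦ norm_nonneg _) fun i _ ↦ hY i ω

section esp

variable {Ω : Type*} [MeasurableSpace Ω] {μ : Measure Ω} {M : ℕ} {Y : Fin M → Ω → ℝ}

theorem integrable_esp [IsFiniteMeasure μ] (mY : ∀ m, AEStronglyMeasurable (Y m) μ)
    (hY : ∀ m ω, ‖Y m ω‖ ≤ 1) (k : ℕ) : Integrable (fun ω ↦ esp M k (Y · ω)) μ :=
  integrable_finsetSum _ fun A _ ↦ integrable_finset_prod_of_norm_le_one mY hY A

theorem ProbabilityTheory.iIndepFun.integral_esp (hindep : iIndepFun Y μ)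
    (mY : ∀ m, AEStronglyMeasurable (Y m) μ) (hY : ∀ m ω, ‖Y m ω‖ ≤ 1) (k : ℕ) :
    ∫ ω, esp M k (Y · ω) ∂μ = esp M k (fun m ↦ ∫ ω, Y m ω ∂μ) := by
  have := hindep.isProbabilityMeasure
  simp only [esp]
  rw [integral_finsetSum _ fun A _ ↦ integrable_finset_prod_of_norm_le_one mY hY A]
  exact sum_congr rfl fun A _ ↦ hindep.integral_finset_prod mY A

end esp

theorem poisson_binomial_tail_general {Ω : Type*} [MeasurableSpace Ω]
    (μ : Measure Ω) [IsProbabilityMeasure μ]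
    (M : ℕ) (X : Fin M → Ω → ℕ) (p : Fin M → ℝ)
    (hmeas : ∀ m, Measurable (X m))
    (hval : ∀ m ω, X m ω ≤ 1)
    (hindep : iIndepFun X μ)
    (hp : ∀ m, (μ {ω | X m ω = 1}).toReal = p m)
    (T : ℕ) (hT1 : 1 ≤ T) :
    (μ {ω | T ≤ ∑ m, X m ω}).toReal =
      ∑ k ∈ Finset.Icc T M,
        (-1 : ℝ) ^ (k + T) * (Nat.choose (k - 1) (T - 1) : ℝ) * esp M k p := by
  set Y : Fin M → Ω → ℝ := fun m ω ↦ X m ω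
  have hY : iIndepFun Y μ := hindep.comp (fun _ n ↦ (n : ℝ)) fun _ ↦ measurable_of_countable _
  have mY (m : Fin M) : AEStronglyMeasurable (Y m) μ :=
    (measurable_of_countable _).comp (hmeas m) |>.aestronglyMeasurable
  have hY1 (m : Fin M) (ω : Ω) : ‖Y m ω‖ ≤ 1 := by
    simpa [Y] using hval m ω
  have hYp (m : Fin M) : ∫ ω, Y m ω ∂μ = p m :=
    (integral_natCast_of_le_one (hmeas m) (hval m)).trans (hp m)
  have htail : MeasurableSet {ω | T ≤ ∑ m, X m ω} :=
    measurableSet_le measurable_const (Finset.measurable_sum _ fun m _ ↦ hmeas m)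
  calc (μ {ω | T ≤ ∑ m, X m ω}).toReal
      = ∫ ω, {ω | T ≤ ∑ m, X m ω}.indicator 1 ω ∂μ := (integral_indicator_one htail).symm
    _ = ∫ ω, ∑ k ∈ Icc T M,
          (-1) ^ (k + T) * ((k - 1).choose (T - 1) : ℝ) * esp M k (Y · ω) ∂μ := by
        congr 1 with ω
        rw [← ite_le_sum_eq_sum_esp hT1 _ fun m ↦ hval m ω, Set.indicator_apply]
        rfl
    _ = _ := by
        rw [integral_finsetSum _ fun k _ ↦ (integrable_esp mY hY1 k).const_mul _]
        simp_rw [integral_const_mul, hY.integral_esp mY hY1, hYp]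

/-- Waring-type inclusion–exclusion formula for the tail of a
Poisson–binomial distribution. -/
theorem poisson_binomial_tail {Ω : Type*} [MeasurableSpace Ω]
    (μ : Measure Ω) [IsProbabilityMeasure μ]
    (M : ℕ) (X : Fin M → Ω → ℕ) (p : Fin M → ℝ)
    (hmeas : ∀ m, Measurable (X m))
    (hval : ∀ m ω, X m ω ≤ 1)
    (hindep : iIndepFun X μ)
    (hp : ∀ m, (μ {ω | X m ω = 1}).toReal = p m)
    (T : ℕ) (hT1 : 1 ≤ T) (hTM : T ≤ M) :
    (μ {ω | T ≤ ∑ m, X m ω}).toReal =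
      ∑ k ∈ Finset.Icc T M,
        (-1 : ℝ) ^ (k + T) * (Nat.choose (k - 1) (T - 1) : ℝ) * esp M k p :=
  poisson_binomial_tail_general μ M X p hmeas hval hindep hp T hT1
end

section
/- Fix M ≥ 1 and T = ⌊M/2⌋ + 1. In the majority-voting fusion setup, if all miss-detection probabilities vanish (P_md,m = 0 for all m), then P_dep = Pr(Σ_{m} X_m ≥ T) = Σ_{k=T}^{M} (−1)^{k+T} C(k−1, T−1) ξ_k(P_fa,1,...,P_fa,M). -/
open MeasureTheory ProbabilityTheory Finset

/-! The event `T ≤ ∑ m, X m` is the disjoint union, over the index sets `A` with `T ≤ #A`, of the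
events `{X m = 1 ↔ m ∈ A}`, whose probabilities factor by independence. Expanding each
`∏ m ∈ Aᶜ, (1 - p m)` and collecting the monomials `∏ m ∈ S, p m`, the coefficient of such a
monomial is `∑ A ⊆ S, T ≤ #A, (-1) ^ #(S \ A)`; passing to the complements `S \ A` turns it into
a partial alternating sum of a row of Pascal's triangle, which equals
`(-1) ^ (#S + T) C(#S - 1, T - 1)`. The miss term vanishes because every `Y m = 1` almost surely,
so `∑ m, Y m = M > T - 1` almost surely. -/

namespace Finset

variable {α : Type*}

theorem sum_powerset_filter_card_le_neg_one_pow (S : Finset α) {k : ℕ} (hk : k < #S) :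
    ∑ B ∈ S.powerset with #B ≤ k, (-1 : ℤ) ^ #B = (-1) ^ k * (#S - 1).choose k := by
  obtain ⟨n, hn⟩ : ∃ n, #S = n + 1 := ⟨#S - 1, by omega⟩
  have hrange : {j ∈ range (n + 1 + 1) | j ≤ k} = range (k + 1) := by
    ext j
    simp only [mem_filter, mem_range]
    omega
  calc ∑ B ∈ S.powerset with #B ≤ k, (-1 : ℤ) ^ #B
      = ∑ j ∈ range (n + 1 + 1) with j ≤ k, (n + 1).choose j • (-1 : ℤ) ^ j := by
        rw [sum_filter, sum_powerset_apply_card (fun j => if j ≤ k then (-1 : ℤ) ^ j else 0),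
          hn, sum_filter]
        simp only [smul_ite, smul_zero]
    _ = (-1) ^ k * (#S - 1).choose k := by
        rw [hrange, hn, Nat.add_sub_cancel, ← Int.alternating_sum_range_choose_eq_choose]
        simp only [nsmul_eq_mul, mul_comm]

theorem sum_powerset_filter_le_card_neg_one_pow_card_sdiff [DecidableEq α] (S : Finset α)
    {T : ℕ} (hT : 1 ≤ T) (hTS : T ≤ #S) :
    ∑ A ∈ S.powerset with T ≤ #A, (-1 : ℤ) ^ #(S \ A) =
      (-1) ^ (#S + T) * (#S - 1).choose (T - 1) := by
  have hcompl : ∑ A ∈ S.powerset with T ≤ #A, (-1 : ℤ) ^ #(S \ A) =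
      ∑ B ∈ S.powerset with #B ≤ #S - T, (-1 : ℤ) ^ #B := by
    refine sum_nbij' (S \ ·) (S \ ·) ?_ ?_ ?_ ?_ (fun _ _ => rfl) <;>
      intro A hA <;> simp only [mem_filter, mem_powerset] at hA ⊢
    iterate 2 exact ⟨sdiff_subset, by rw [card_sdiff_of_subset hA.1]; omega⟩
    iterate 2 exact sdiff_sdiff_eq_self hA.1
  have hsymm : (#S - 1).choose (#S - T) = (#S - 1).choose (T - 1) :=
    Nat.choose_symm_of_eq_add (by omega)
  have hsign : (-1 : ℤ) ^ (#S - T) = (-1) ^ (#S + T) := by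
    rw [show #S + T = #S - T + 2 * T by omega, pow_add, pow_mul]; simp
  rw [hcompl, sum_powerset_filter_card_le_neg_one_pow S (by omega), hsymm, hsign]

variable {ι R : Type*} [Fintype ι] [DecidableEq ι] [CommRing R]

theorem prod_mul_prod_compl_one_sub_eq_sum_Icc (A : Finset ι) (p : ι → R) :
    (∏ i ∈ A, p i) * ∏ i ∈ Aᶜ, (1 - p i) = ∑ S ∈ Icc A univ, (-1) ^ #(S \ A) * ∏ i ∈ S, p i := by
  rw [Icc_eq_image_powerset (subset_univ A), ← compl_eq_univ_sdiff, sum_image, prod_sub, mul_sum]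
  · refine sum_congr rfl fun B hB => ?_
    have hdisj : Disjoint A B := disjoint_compl_right.mono_right (mem_powerset.1 hB)
    rw [union_sdiff_cancel_left hdisj, prod_union hdisj]
    simp only [prod_const_one, mul_one]
    ring
  · intro B hB C hC hBC
    simp only [coe_powerset, Set.mem_preimage, Set.mem_powerset_iff, coe_subset] at hB hC
    have hB' := disjoint_compl_right.mono_right hB
    have hC' := disjoint_compl_right.mono_right hC
    rw [← union_sdiff_cancel_left hB', ← union_sdiff_cancel_left hC']
    exact congrArg (· \ A) hBC

theorem sum_le_card_prod_mul_prod_compl_one_sub {T : ℕ} (hT : 1 ≤ T) (p : ι → R) :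
    ∑ A with T ≤ #A, (∏ i ∈ A, p i) * ∏ i ∈ Aᶜ, (1 - p i) =
      ∑ S with T ≤ #S, (-1) ^ (#S + T) * ((#S - 1).choose (T - 1) : R) * ∏ i ∈ S, p i := by
  calc _ = ∑ A with T ≤ #A, ∑ S ∈ Icc A univ, (-1) ^ #(S \ A) * ∏ i ∈ S, p i :=
        sum_congr rfl fun A _ => prod_mul_prod_compl_one_sub_eq_sum_Icc A p
    _ = ∑ S, (∑ A ∈ S.powerset with T ≤ #A, (-1 : ℤ) ^ #(S \ A) : ℤ) * ∏ i ∈ S, p i := by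
        rw [sum_comm' (t' := univ) (s' := fun S => {A ∈ S.powerset | T ≤ #A})]
        · simp only [Int.cast_sum, Int.cast_pow, Int.cast_neg, Int.cast_one, sum_mul]
        · intro A S
          simp only [mem_filter, mem_univ, true_and, mem_Icc, subset_univ, and_true,
            mem_powerset]
          tauto
    _ = _ := by
        rw [← sum_filter_of_ne (p := (T ≤ #·))]
        · refine sum_congr rfl fun S hS => ?_
          rw [sum_powerset_filter_le_card_neg_one_pow_card_sdiff S hT (mem_filter.1 hS).2]
          push_cast
          ring
        · intro S _ hS
          by_contra hTS
          rw [filter_false_of_mem fun A hA => by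
            have := card_le_card (mem_powerset.1 hA); omega] at hS
          simp at hS

end Finset

theorem sum_le_card_mul_prod_eq_sum_Icc_esp (M T : ℕ) (f : ℕ → ℝ) (x : Fin M → ℝ) :
    ∑ S : Finset (Fin M) with T ≤ #S, f #S * ∏ m ∈ S, x m = ∑ k ∈ Icc T M, f k * esp M k x := by
  rw [← sum_fiberwise_of_maps_to (g := card) (t := Icc T M)]
  · refine sum_congr rfl fun k hk => ?_
    rw [esp, mul_sum]
    refine sum_congr ?_ fun S hS => ?_
    · ext S
      simp only [mem_filter, mem_univ, true_and, mem_powersetCard, subset_univ]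
      have := (mem_Icc.1 hk).1
      constructor <;> rintro ⟨h1, h2⟩ <;> omega
    · rw [(mem_powersetCard.1 hS).2]
  · intro S hS
    exact mem_Icc.2 ⟨(mem_filter.1 hS).2, card_le_univ S |>.trans_eq (Fintype.card_fin M)⟩

theorem sum_eq_card_filter_eq_one {ι : Type*} [Fintype ι] {x : ι → ℕ}
    (hx : ∀ m, x m ≤ 1) : ∑ m, x m = #{m | x m = 1} := by
  rw [card_filter]
  refine sum_congr rfl fun m _ => ?_
  have := hx m
  split_ifs <;> omega

theorem measureReal_preimage_zero_eq_one_sub {Ω : Type*} [MeasurableSpace Ω] {μ : Measure Ω}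
    [IsProbabilityMeasure μ] {f : Ω → ℕ} (hf : Measurable f) (hf1 : ∀ ω, f ω ≤ 1) :
    μ.real (f ⁻¹' {0}) = 1 - μ.real {ω | f ω = 1} := by
  have : f ⁻¹' {0} = {ω | f ω = 1}ᶜ := by
    ext ω
    have := hf1 ω
    simp only [Set.mem_preimage, Set.mem_singleton_iff, Set.mem_compl_iff, Set.mem_ofPred_eq]
    omega
  rw [this, probReal_compl_eq_one_sub (s := {ω | f ω = 1}) (hf (measurableSet_singleton 1))]

theorem setOf_filter_eq_one_eq_iInter {Ω ι : Type*} [Fintype ι] [DecidableEq ι] {X : ι → Ω → ℕ}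
    (hX : ∀ m ω, X m ω ≤ 1) (A : Finset ι) :
    {ω | ({m | X m ω = 1} : Finset ι) = A} = ⋂ m, X m ⁻¹' {if m ∈ A then 1 else 0} := by
  ext ω
  simp only [Set.mem_ofPred_eq, Finset.ext_iff, mem_filter, mem_univ, true_and, Set.mem_iInter,
    Set.mem_preimage, Set.mem_singleton_iff]
  refine forall_congr' fun m => ?_
  have := hX m ω
  by_cases hm : m ∈ A
  · simp [hm]
  · simp [hm]; omega

section IndicatorVariables

variable {Ω ι : Type*} [MeasurableSpace Ω] {μ : Measure Ω} [IsProbabilityMeasure μ] [Fintype ι]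
  {X : ι → Ω → ℕ}

theorem measureReal_le_sum_eq_sum_prod_mul_prod_compl_one_sub [DecidableEq ι]
    (hXm : ∀ m, Measurable (X m)) (hX : ∀ m ω, X m ω ≤ 1) (hind : iIndepFun X μ)
    {p : ι → ℝ} (hp : ∀ m, μ.real {ω | X m ω = 1} = p m) (T : ℕ) :
    μ.real {ω | T ≤ ∑ m, X m ω} = ∑ A with T ≤ #A, (∏ m ∈ A, p m) * ∏ m ∈ Aᶜ, (1 - p m) := by
  set N : Ω → Finset ι := fun ω => {m | X m ω = 1}
  have hfiber (A : Finset ι) : N ⁻¹' {A} = ⋂ m, X m ⁻¹' {if m ∈ A then 1 else 0} :=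
    setOf_filter_eq_one_eq_iInter hX A
  have hset : {ω | T ≤ ∑ m, X m ω} = N ⁻¹' ↑({A | T ≤ #A} : Finset (Finset ι)) := by
    ext ω
    simp [N, sum_eq_card_filter_eq_one (hX · ω)]
  rw [hset, ← sum_measureReal_preimage_singleton _
    fun A _ => hfiber A ▸ .iInter fun m => hXm m (measurableSet_singleton _)]
  refine sum_congr rfl fun A _ => ?_
  rw [hfiber, measureReal_def, hind.meas_iInter fun m => ⟨_, measurableSet_singleton _, rfl⟩,
    ENNReal.toReal_prod, ← prod_mul_prod_compl A]
  congr 1 <;> refine prod_congr rfl fun m hm => ?_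
  · rw [if_pos hm, ← hp]; rfl
  · rw [if_neg (mem_compl.1 hm), ← measureReal_def,
      measureReal_preimage_zero_eq_one_sub (hXm m) (hX m), hp]

theorem measure_sum_lt_card_eq_zero (hXm : ∀ m, Measurable (X m))
    (h : ∀ m, μ {ω | X m ω = 1} = 1) : μ {ω | ∑ m, X m ω < Fintype.card ι} = 0 := by
  have hall : ∀ᵐ ω ∂μ, ∀ m, X m ω = 1 :=
    ae_all_iff.2 fun m => (mem_ae_iff_prob_eq_one (hXm m (measurableSet_singleton 1))).2 (h m)
  refine measure_mono_null (t := {ω | ¬∀ m, X m ω = 1}) (fun ω hω hω1 => ?_) (ae_iff.1 hall)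
  simp_all

end IndicatorVariables

theorem dep_perfect_detection_general {Ω : Type*} [MeasurableSpace Ω]
    (μ : Measure Ω) [IsProbabilityMeasure μ]
    (M : ℕ) (hM : 1 ≤ M) (T : ℕ) (hT : T = M / 2 + 1)
    (X Y : Fin M → Ω → ℕ)
    (hXmeas : ∀ m, Measurable (X m)) (hYmeas : ∀ m, Measurable (Y m))
    (hXval : ∀ m ω, X m ω ≤ 1)
    (hXindep : iIndepFun X μ)
    (pfa pmd : Fin M → ℝ)
    (hpfa : ∀ m, (μ {ω | X m ω = 1}).toReal = pfa m)
    (hpmd : ∀ m, (μ {ω | Y m ω = 1}).toReal = 1 - pmd m)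
    (hmd0 : ∀ m, pmd m = 0) :
    (μ {ω | T ≤ ∑ m, X m ω}).toReal + (μ {ω | ∑ m, Y m ω ≤ T - 1}).toReal =
      ∑ k ∈ Finset.Icc T M,
        (-1 : ℝ) ^ (k + T) * (Nat.choose (k - 1) (T - 1) : ℝ) * esp M k pfa := by
  have hmiss : μ {ω | ∑ m, Y m ω ≤ T - 1} = 0 := by
    refine measure_mono_null (fun ω (hω : _ ≤ T - 1) => ?_)
      (measure_sum_lt_card_eq_zero hYmeas fun m => ?_)
    · change ∑ m, Y m ω < Fintype.card (Fin M)
      rw [Fintype.card_fin]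
      omega
    · rw [← ENNReal.toReal_eq_one_iff, hpmd, hmd0, sub_zero]
  rw [hmiss, ENNReal.toReal_zero, add_zero, ← measureReal_def,
    measureReal_le_sum_eq_sum_prod_mul_prod_compl_one_sub hXmeas hXval hXindep hpfa,
    sum_le_card_prod_mul_prod_compl_one_sub (by omega)]
  exact sum_le_card_mul_prod_eq_sum_Icc_esp M T
    (fun k => (-1) ^ (k + T) * ((k - 1).choose (T - 1) : ℝ)) pfa

/-- in the perfect-detection regime (`P_md,m = 0` for all wardens), the
system detection error probability reduces to the majority-rule false-alarm tail, with
closed-form ESP representation. -/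
theorem dep_perfect_detection {Ω : Type*} [MeasurableSpace Ω]
    (μ : Measure Ω) [IsProbabilityMeasure μ]
    (M : ℕ) (hM : 1 ≤ M) (T : ℕ) (hT : T = M / 2 + 1)
    (X Y : Fin M → Ω → ℕ)
    (hXmeas : ∀ m, Measurable (X m)) (hYmeas : ∀ m, Measurable (Y m))
    (hXval : ∀ m ω, X m ω ≤ 1) (hYval : ∀ m ω, Y m ω ≤ 1)
    (hXindep : iIndepFun X μ)
    (hYindep : iIndepFun Y μ)
    (pfa pmd : Fin M → ℝ)
    (hpfa : ∀ m, (μ {ω | X m ω = 1}).toReal = pfa m)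
    (hpmd : ∀ m, (μ {ω | Y m ω = 1}).toReal = 1 - pmd m)
    (hmd0 : ∀ m, pmd m = 0) :
    (μ {ω | T ≤ ∑ m, X m ω}).toReal + (μ {ω | ∑ m, Y m ω ≤ T - 1}).toReal =
      ∑ k ∈ Finset.Icc T M,
        (-1 : ℝ) ^ (k + T) * (Nat.choose (k - 1) (T - 1) : ℝ) * esp M k pfa :=
  dep_perfect_detection_general μ M hM T hT X Y hXmeas hYmeas hXval hXindep pfa pmd hpfa hpmd hmd0
end
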